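/- Under the hypotheses of the previous statement (group Lasso minimizer β̂, supp(β*) ⊆ G_{S*}, event max_j ‖X_{G_j}^T(y−Xβ*)‖₂/(ω_j n) ≤ (ξ−1)/(ξ+1), and SCIF₁(ξ,ω,S*,S*) > 0), the prediction error satisfies ‖Xβ̂ − Xβ*‖₂²/n ≤ (2ξ/(ξ+1))² Σ_{j∈S*} ω_j² / SCIF₁(ξ,ω,S*,S*). -/
import Mathlib


open Matrix

/-- Groupwise ℓ₂ norm: the ℓ₂ norm of the restriction of `v` to the coordinate set `s`. -/
noncomputable def gnorm {p : ℕ} (v : Fin p → ℝ) (s : Finset (Fin p)) : ℝ :=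
  Real.sqrt (∑ i ∈ s, v i ^ 2)

/-- Membership in the group cone `C(ξ,ω,T)`. -/
def ConeMem {p M : ℕ} (G : Fin M → Finset (Fin p)) (ω : Fin M → ℝ)
    (T : Finset (Fin M)) (ξ : ℝ) (u : Fin p → ℝ) : Prop :=
  ∑ j ∈ Tᶜ, ω j * gnorm u (G j) ≤ ξ * ∑ j ∈ T, ω j * gnorm u (G j) ∧
    ∑ j ∈ T, ω j * gnorm u (G j) ≠ 0

/-- Membership in the sign-restricted group cone `C₋(ξ,ω,T)`. -/
def SignConeMem {n p M : ℕ} (X : Matrix (Fin n) (Fin p) ℝ)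
    (G : Fin M → Finset (Fin p)) (ω : Fin M → ℝ)
    (T : Finset (Fin M)) (ξ : ℝ) (u : Fin p → ℝ) : Prop :=
  ConeMem G ω T ξ u ∧ ∀ j ∉ T, ∑ i ∈ G j, u i * (Xᵀ *ᵥ (X *ᵥ u)) i ≤ 0

/-- The groupwise sign-restricted cone invertibility factor `SCIF₁(ξ,ω,T,T)`. -/
noncomputable def SCIF1 {n p M : ℕ} (X : Matrix (Fin n) (Fin p) ℝ)
    (G : Fin M → Finset (Fin p)) (ω : Fin M → ℝ)
    (T : Finset (Fin M)) (ξ : ℝ) : ℝ :=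
  sInf {r : ℝ | ∃ u, SignConeMem X G ω T ξ u ∧
    r = (⨆ j, (ω j)⁻¹ * gnorm (Xᵀ *ᵥ (X *ᵥ u)) (G j)) * (∑ j ∈ T, ω j ^ 2)
      / (n * ∑ j ∈ T, ω j * gnorm u (G j))}

lemma gnorm_nonneg {p : ℕ} (v : Fin p → ℝ) (s : Finset (Fin p)) : 0 ≤ gnorm v s :=
  Real.sqrt_nonneg _

lemma gnorm_sq {p : ℕ} (v : Fin p → ℝ) (s : Finset (Fin p)) :
    gnorm v s ^ 2 = ∑ i ∈ s, v i ^ 2 :=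
  Real.sq_sqrt (Finset.sum_nonneg fun i _ => sq_nonneg _)

lemma gnorm_eq_zero {p : ℕ} {v : Fin p → ℝ} {s : Finset (Fin p)}
    (h : gnorm v s = 0) : ∀ i ∈ s, v i = 0 := by
  intro i hi
  have h2 : ∑ i ∈ s, v i ^ 2 = 0 := by
    have := gnorm_sq v s; rw [h] at this; simpa using this.symm
  have := (Finset.sum_eq_zero_iff_of_nonneg (fun i _ => sq_nonneg (v i))).1 h2 i hi
  exact pow_eq_zero_iff (n := 2) (by norm_num) |>.1 this

lemma gnorm_congr {p : ℕ} {v w : Fin p → ℝ} {s : Finset (Fin p)}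
    (h : ∀ i ∈ s, v i = w i) : gnorm v s = gnorm w s := by
  unfold gnorm; congr 1; exact Finset.sum_congr rfl fun i hi => by rw [h i hi]

lemma sum_mul_le_gnorm {p : ℕ} (a b : Fin p → ℝ) (s : Finset (Fin p)) :
    ∑ i ∈ s, a i * b i ≤ gnorm a s * gnorm b s :=
  Real.sum_mul_le_sqrt_mul_sqrt s a b

lemma gnorm_add_le {p : ℕ} (a b : Fin p → ℝ) (s : Finset (Fin p)) :
    gnorm (a + b) s ≤ gnorm a s + gnorm b s := by
  have h1 : gnorm (a + b) s ^ 2 ≤ (gnorm a s + gnorm b s) ^ 2 := by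
    rw [gnorm_sq, add_sq, gnorm_sq, gnorm_sq]
    have := sum_mul_le_gnorm a b s
    have e : ∑ i ∈ s, (a + b) i ^ 2
        = ∑ i ∈ s, a i ^ 2 + 2 * ∑ i ∈ s, a i * b i + ∑ i ∈ s, b i ^ 2 := by
      simp only [Pi.add_apply, add_sq]
      rw [Finset.sum_add_distrib, Finset.sum_add_distrib, Finset.mul_sum]
      ring_nf
    rw [e]; nlinarith
  have hnn : 0 ≤ gnorm a s + gnorm b s :=
    add_nonneg (gnorm_nonneg _ _) (gnorm_nonneg _ _)
  nlinarith [gnorm_nonneg (a+b) s]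

lemma gnorm_smul {p : ℕ} (c : ℝ) (v : Fin p → ℝ) (s : Finset (Fin p)) :
    gnorm (fun i => c * v i) s = |c| * gnorm v s := by
  unfold gnorm
  rw [← Real.sqrt_sq_eq_abs, ← Real.sqrt_mul (sq_nonneg c), Finset.mul_sum]
  congr 1; exact Finset.sum_congr rfl fun i _ => by ring

lemma gnorm_neg {p : ℕ} (v : Fin p → ℝ) (s : Finset (Fin p)) :
    gnorm (-v) s = gnorm v s := by
  unfold gnorm; congr 1; exact Finset.sum_congr rfl fun i _ => by simp [neg_pow]

/-- ⟨u, Xᵀ w⟩ = ⟨X u, w⟩ -/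
lemma adj {n p : ℕ} (X : Matrix (Fin n) (Fin p) ℝ) (u : Fin p → ℝ) (w : Fin n → ℝ) :
    ∑ i, u i * (Xᵀ *ᵥ w) i = ∑ k, (X *ᵥ u) k * w k := by
  simp only [Matrix.mulVec, dotProduct, Matrix.transpose_apply,
    Finset.mul_sum, Finset.sum_mul]
  rw [Finset.sum_comm]
  exact Finset.sum_congr rfl fun k _ => Finset.sum_congr rfl fun i _ => by ring

lemma expand_sq {n : ℕ} (a b : Fin n → ℝ) :
    ∑ i, (a - b) i ^ 2 = ∑ i, a i ^ 2 - 2 * ∑ i, a i * b i + ∑ i, b i ^ 2 := by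
  simp only [Pi.sub_apply, sub_sq]
  rw [Finset.sum_add_distrib, Finset.sum_sub_distrib, Finset.mul_sum]
  ring_nf

lemma le_of_forall_t {a b c : ℝ} (hb : 0 ≤ b)
    (h : ∀ t : ℝ, 0 < t → t ≤ 1 → c ≤ a + t * b) : c ≤ a := by
  by_contra hac
  push_neg at hac
  have ht0 : (0:ℝ) < min 1 ((c - a) / (2 * (b + 1))) := by
    apply lt_min one_pos
    apply div_pos (by linarith) (by linarith)
  have := h _ ht0 (min_le_left _ _)
  have h2 : min 1 ((c - a) / (2 * (b + 1))) * b ≤ ((c - a) / (2 * (b + 1))) * b :=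
    mul_le_mul_of_nonneg_right (min_le_right _ _) hb
  have h3 : ((c - a) / (2 * (b + 1))) * b < c - a := by
    rw [div_mul_eq_mul_div, div_lt_iff₀ (by linarith)]
    nlinarith
  linarith

lemma expand_smul {n : ℕ} (a b : Fin n → ℝ) (t : ℝ) :
    ∑ i, (a - t • b) i ^ 2
      = ∑ i, a i ^ 2 - 2 * t * ∑ i, a i * b i + t ^ 2 * ∑ i, b i ^ 2 := by
  have h : ∀ i, (a i - t * b i) ^ 2
      = a i ^ 2 - 2 * t * (a i * b i) + t ^ 2 * b i ^ 2 := fun i => by ring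
  simp only [Pi.sub_apply, Pi.smul_apply, smul_eq_mul]
  simp_rw [h, Finset.sum_add_distrib, Finset.sum_sub_distrib, ← Finset.mul_sum]

lemma sum_part {p M : ℕ} {G : Fin M → Finset (Fin p)} (hpart : ∀ i : Fin p, ∃! j, i ∈ G j)
    (f : Fin p → ℝ) : ∑ i, f i = ∑ j, ∑ i ∈ G j, f i := by
  have h : ∀ j, ∑ i ∈ G j, f i = ∑ i, if i ∈ G j then f i else 0 := by
    intro j; rw [Finset.sum_ite_mem, Finset.univ_inter]
  simp_rw [h]
  rw [Finset.sum_comm]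
  refine (Finset.sum_congr rfl fun i _ => ?_).symm
  obtain ⟨j0, hj0, huniq⟩ := hpart i
  rw [Finset.sum_eq_single j0]
  · simp [hj0]
  · intro b _ hb
    simp only [ite_eq_right_iff]
    intro h'; exact absurd (huniq b h') hb
  · simp

lemma mul_out {c a d b e : ℝ} (hc : 0 < c) (h : a/c + b ≤ d/c + e) :
    a + c*b ≤ d + c*e := by
  rw [div_add' _ _ _ hc.ne', div_add' _ _ _ hc.ne', div_le_div_iff₀ hc hc] at h
  nlinarith [h, hc]

set_option maxHeartbeats 3000000 in
/-- prediction error bound for the group Lasso.  Under the event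
`max_j ‖X_{G_j}ᵀ(y − Xβ*)‖₂/(ω_j n) ≤ (ξ−1)/(ξ+1)` and `SCIF₁(ξ,ω,S*,S*) > 0`,
`‖Xβ̂ − Xβ*‖₂²/n ≤ (2ξ/(ξ+1))² Σ_{j∈S*} ω_j² / SCIF₁(ξ,ω,S*,S*)`. -/
theorem stmt15 {n p M : ℕ} (hn : 0 < n) (y : Fin n → ℝ)
    (X : Matrix (Fin n) (Fin p) ℝ)
    (G : Fin M → Finset (Fin p)) (hpart : ∀ i : Fin p, ∃! j, i ∈ G j)
    (ω : Fin M → ℝ) (hω : ∀ j, 0 < ω j)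
    (Sstar : Finset (Fin M)) (ξ : ℝ) (hξ : 1 < ξ)
    (βstar βhat : Fin p → ℝ)
    (hsupp : ∀ i, βstar i ≠ 0 → ∃ j ∈ Sstar, i ∈ G j)
    (hmin : ∀ β' : Fin p → ℝ,
      (∑ i, (y - X *ᵥ βhat) i ^ 2) / (2 * n) + ∑ j, ω j * gnorm βhat (G j)
        ≤ (∑ i, (y - X *ᵥ β') i ^ 2) / (2 * n) + ∑ j, ω j * gnorm β' (G j))
    (hevent : ∀ j, gnorm (Xᵀ *ᵥ (y - X *ᵥ βstar)) (G j) / (ω j * n) ≤ (ξ - 1) / (ξ + 1))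
    (hSCIF : 0 < SCIF1 X G ω Sstar ξ) :
    (∑ i, (X *ᵥ βhat - X *ᵥ βstar) i ^ 2) / n
      ≤ (2 * ξ / (ξ + 1)) ^ 2 * (∑ j ∈ Sstar, ω j ^ 2) / SCIF1 X G ω Sstar ξ := by
  -- notation
  set nR : ℝ := (n : ℝ) with hnRdef
  have hnR : (0:ℝ) < nR := by rw [hnRdef]; exact_mod_cast hn
  set lam : ℝ := (ξ - 1) / (ξ + 1) with hlamdef
  have hξ1 : (0:ℝ) < ξ + 1 := by linarith
  have hlam0 : 0 ≤ lam := div_nonneg (by linarith) hξ1.le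
  have hlam1 : lam < 1 := by rw [hlamdef, div_lt_one hξ1]; linarith
  set u : Fin p → ℝ := βhat - βstar with hudef
  set w : Fin p → ℝ := Xᵀ *ᵥ (y - X *ᵥ βhat) with hwdef
  set z : Fin p → ℝ := Xᵀ *ᵥ (y - X *ᵥ βstar) with hzdef

  have hdisj : ∀ {i : Fin p} {j j' : Fin M}, i ∈ G j → i ∈ G j' → j = j' := by
    intro i j j' hj hj'
    obtain ⟨j0, _, huniq⟩ := hpart i
    rw [huniq j hj, huniq j' hj']
  have hev' : ∀ j, gnorm z (G j) ≤ lam * (ω j * nR) := by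
    intro j
    have hpos : (0:ℝ) < ω j * nR := mul_pos (hω j) hnR
    have h := hevent j
    rwa [div_le_iff₀ hpos] at h
  set P : ℝ := ∑ j, ω j * gnorm βhat (G j) with hPdef
  set S : ℝ := ∑ i, (y - X *ᵥ βhat) i ^ 2 with hSdef
  have hmin' : ∀ β' : Fin p → ℝ,
      S + 2*nR*P ≤ ∑ i, (y - X *ᵥ β') i ^ 2 + 2*nR*∑ j, ω j * gnorm β' (G j) :=
    fun β' => mul_out (by positivity) (hmin β')
  have hip : ∀ v : Fin p → ℝ, ∑ k, (y - X *ᵥ βhat) k * (X *ᵥ v) k = ∑ i, v i * w i := by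
    intro v
    have h := adj X v (y - X *ᵥ βhat)
    rw [← hwdef] at h
    exact (Finset.sum_congr rfl fun k _ => mul_comm _ _).trans h.symm
  -- dual feasibility
  have F1 : ∀ j, gnorm w (G j) ≤ nR * ω j := by
    intro j
    classical
    set v : Fin p → ℝ := fun i => if i ∈ G j then w i else 0 with hvdef
    set g : ℝ := gnorm w (G j) with hgdef
    have hg0 : 0 ≤ g := gnorm_nonneg _ _
    set Q : ℝ := ∑ k, (X *ᵥ v) k ^ 2 with hQdef
    have hQ0 : 0 ≤ Q := Finset.sum_nonneg fun k _ => sq_nonneg _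
    have hvw : ∑ i, v i * w i = g ^ 2 := by
      rw [hgdef, gnorm_sq]
      rw [show (∑ i, v i * w i) = ∑ i, (if i ∈ G j then w i * w i else 0) from
        Finset.sum_congr rfl fun i _ => by by_cases h : i ∈ G j <;> simp [hvdef, h]]
      rw [Finset.sum_ite_mem, Finset.univ_inter]
      exact Finset.sum_congr rfl fun i _ => by ring
    have hkey : g ^ 2 ≤ nR * ω j * g := by
      refine le_of_forall_t (by positivity : (0:ℝ) ≤ Q/2) ?_
      intro t ht ht1
      have hβ' : y - X *ᵥ (βhat + t • v) = (y - X *ᵥ βhat) - t • (X *ᵥ v) := by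
        rw [mulVec_add, mulVec_smul]; abel
      have hquad : ∑ i, (y - X *ᵥ (βhat + t • v)) i ^ 2 = S - 2*t*(g^2) + t^2*Q := by
        rw [hβ', expand_smul, hip v, hvw, hSdef, hQdef]
      have hpen : ∑ j', ω j' * gnorm (βhat + t • v) (G j') ≤ P + t * (ω j * g) := by
        have hpoint : ∀ j' ∈ Finset.univ, ω j' * gnorm (βhat + t • v) (G j')
            ≤ ω j' * gnorm βhat (G j') + (if j' = j then t * (ω j * g) else 0) := by
          intro j' _
          by_cases hj' : j' = j
          · subst hj'
            rw [if_pos rfl]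
            have h1 : gnorm (t • v) (G j') = t * g := by
              have h2 : gnorm (t • v) (G j') = |t| * gnorm v (G j') :=
                gnorm_smul t v (G j')
              have h3 : gnorm v (G j') = g := by
                rw [hgdef]; exact gnorm_congr fun i hi => by simp [hvdef, hi]
              rw [h2, h3, abs_of_nonneg ht.le]
            have h4 := gnorm_add_le βhat (t • v) (G j')
            rw [h1] at h4
            nlinarith [hω j', h4]
          · rw [if_neg hj', add_zero]
            have h5 : gnorm (βhat + t • v) (G j') = gnorm βhat (G j') := by
              refine gnorm_congr fun i hi => ?_
              have hnot : i ∉ G j := fun hin => hj' (hdisj hi hin)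
              simp [hvdef, hnot]
            rw [h5]
        calc ∑ j', ω j' * gnorm (βhat + t • v) (G j')
            ≤ ∑ j', (ω j' * gnorm βhat (G j') + (if j' = j then t * (ω j * g) else 0)) :=
              Finset.sum_le_sum hpoint
          _ = P + t * (ω j * g) := by
              rw [Finset.sum_add_distrib, hPdef]
              congr 1
              simp
      have hm := hmin' (βhat + t • v)
      rw [hquad] at hm
      have hm2 : S + 2*nR*P ≤ S - 2*t*(g^2) + t^2*Q + 2*nR*(P + t*(ω j*g)) := by
        have h6 := mul_le_mul_of_nonneg_left hpen (by positivity : (0:ℝ) ≤ 2*nR)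
        linarith
      nlinarith [hm2, ht]
    nlinarith [hkey, hg0, mul_pos hnR (hω j)]
  -- primal lower bound
  have F2 : ∀ j, nR * ω j * gnorm βhat (G j) ≤ ∑ i ∈ G j, βhat i * w i := by
    intro j
    classical
    set v : Fin p → ℝ := fun i => if i ∈ G j then βhat i else 0 with hvdef
    set g : ℝ := gnorm βhat (G j) with hgdef
    set c : ℝ := ∑ i ∈ G j, βhat i * w i with hcdef
    set Q : ℝ := ∑ k, (X *ᵥ v) k ^ 2 with hQdef
    have hQ0 : 0 ≤ Q := Finset.sum_nonneg fun k _ => sq_nonneg _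
    have hvw : ∑ i, v i * w i = c := by
      rw [hcdef, show (∑ i, v i * w i) = ∑ i, (if i ∈ G j then βhat i * w i else 0) from
        Finset.sum_congr rfl fun i _ => by by_cases h : i ∈ G j <;> simp [hvdef, h]]
      rw [Finset.sum_ite_mem, Finset.univ_inter]
    refine le_of_forall_t (by positivity : (0:ℝ) ≤ Q/2) ?_
    intro t ht ht1
    have hβ' : y - X *ᵥ (βhat - t • v) = (y - X *ᵥ βhat) - (-t) • (X *ᵥ v) := by
      rw [mulVec_sub, mulVec_smul]; module
    have hquad : ∑ i, (y - X *ᵥ (βhat - t • v)) i ^ 2 = S + 2*t*c + t^2*Q := by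
      rw [hβ', expand_smul, hip v, hvw, hSdef, hQdef]; ring
    have hpen : ∑ j', ω j' * gnorm (βhat - t • v) (G j') ≤ P - t * (ω j * g) := by
      have hpoint : ∀ j' ∈ Finset.univ, ω j' * gnorm (βhat - t • v) (G j')
          ≤ ω j' * gnorm βhat (G j') - (if j' = j then t * (ω j * g) else 0) := by
        intro j' _
        by_cases hj' : j' = j
        · subst hj'
          rw [if_pos rfl]
          have h6 : gnorm (βhat - t • v) (G j') = gnorm (fun i => (1-t) * βhat i) (G j') :=
            gnorm_congr fun i hi => by simp [hvdef, hi]; ring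
          have h7 : gnorm (βhat - t • v) (G j') = (1 - t) * g := by
            rw [h6, gnorm_smul, abs_of_nonneg (by linarith : (0:ℝ) ≤ 1 - t), hgdef]
          rw [h7]
          exact le_of_eq (by ring)
        · rw [if_neg hj', sub_zero]
          have h5 : gnorm (βhat - t • v) (G j') = gnorm βhat (G j') := by
            refine gnorm_congr fun i hi => ?_
            have hnot : i ∉ G j := fun hin => hj' (hdisj hi hin)
            simp [hvdef, hnot]
          rw [h5]
      calc ∑ j', ω j' * gnorm (βhat - t • v) (G j')
          ≤ ∑ j', (ω j' * gnorm βhat (G j') - (if j' = j then t * (ω j * g) else 0)) :=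
            Finset.sum_le_sum hpoint
        _ = P - t * (ω j * g) := by
            rw [Finset.sum_sub_distrib, hPdef]
            congr 1
            simp
    have hm := hmin' (βhat - t • v)
    rw [hquad] at hm
    have hm2 : S + 2*nR*P ≤ S + 2*t*c + t^2*Q + 2*nR*(P - t*(ω j*g)) := by
      have h6 := mul_le_mul_of_nonneg_left hpen (by positivity : (0:ℝ) ≤ 2*nR)
      linarith
    nlinarith [hm2, ht]
  -- identities for u
  have hXu : X *ᵥ u = X *ᵥ βhat - X *ᵥ βstar := by rw [hudef, mulVec_sub]
  rw [show X *ᵥ βhat - X *ᵥ βstar = X *ᵥ u from hXu.symm]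
  set QU : ℝ := ∑ i, (X *ᵥ u) i ^ 2 with hQUdef
  have hQU0 : 0 ≤ QU := Finset.sum_nonneg fun k _ => sq_nonneg _
  have hXtXu : Xᵀ *ᵥ (X *ᵥ u) = z - w := by
    rw [hzdef, hwdef, ← mulVec_sub, hXu]
    congr 1
    abel
  have hadj_u : ∑ i, u i * (Xᵀ *ᵥ (X *ᵥ u)) i = QU := by
    rw [adj X u (X *ᵥ u), hQUdef]
    exact Finset.sum_congr rfl fun k _ => by ring
  have hsplit_uzw : ∑ i, u i * z i - ∑ i, u i * w i = QU := by
    rw [← hadj_u, hXtXu, ← Finset.sum_sub_distrib]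
    exact (Finset.sum_congr rfl fun i _ => by simp [mul_sub]).symm
  -- support facts
  have hβstar0 : ∀ j ∉ Sstar, ∀ i ∈ G j, βstar i = 0 := by
    intro j hj i hi
    by_contra hne
    obtain ⟨j', hj', hij'⟩ := hsupp i hne
    exact hj (by rw [hdisj hi hij']; exact hj')
  have hgu_off : ∀ j ∉ Sstar, gnorm βhat (G j) = gnorm u (G j) := by
    intro j hj
    exact gnorm_congr fun i hi => by simp [hudef, hβstar0 j hj i hi]
  have hgstar_off : ∀ j ∉ Sstar, gnorm βstar (G j) = 0 := by
    intro j hj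
    have h : ∑ i ∈ G j, βstar i ^ 2 = 0 :=
      Finset.sum_eq_zero fun i hi => by rw [hβstar0 j hj i hi]; ring
    simp [gnorm, h]
  have htri : ∀ j, gnorm βstar (G j) ≤ gnorm βhat (G j) + gnorm u (G j) := by
    intro j
    have h := gnorm_add_le βhat (-u) (G j)
    rw [gnorm_neg] at h
    have he : βhat + -u = βstar := by rw [hudef]; abel
    rwa [he] at h
  set NS : ℝ := ∑ j ∈ Sstar, ω j * gnorm u (G j) with hNSdef
  set NC : ℝ := ∑ j ∈ Sstarᶜ, ω j * gnorm u (G j) with hNCdef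
  have hNS0 : 0 ≤ NS :=
    Finset.sum_nonneg fun j _ => mul_nonneg (hω j).le (gnorm_nonneg _ _)
  have hNC0 : 0 ≤ NC :=
    Finset.sum_nonneg fun j _ => mul_nonneg (hω j).le (gnorm_nonneg _ _)
  -- basic inequality and cone bound
  have hcone : NC ≤ ξ * NS := by
    have hm := hmin' βstar
    have hy : y - X *ᵥ βstar = (y - X *ᵥ βhat) - (-1 : ℝ) • (X *ᵥ u) := by
      rw [hXu]; module
    have hq : ∑ i, (y - X *ᵥ βstar) i ^ 2 = S + 2*(∑ i, u i * w i) + QU := by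
      rw [hy, expand_smul, hip u, hSdef, hQUdef]; ring
    rw [hq] at hm
    -- 2 nR (P - P*) ≤ 2 Σ u w + QU ; Σ u w = Σ u z - QU
    have huz_le : ∑ i, u i * z i ≤ lam * nR * (NS + NC) := by
      have h1 : ∑ i, u i * z i = ∑ j, ∑ i ∈ G j, u i * z i :=
        sum_part hpart (fun i => u i * z i)
      have h2 : ∀ j ∈ Finset.univ, ∑ i ∈ G j, u i * z i
          ≤ gnorm u (G j) * (lam * (ω j * nR)) := fun j _ =>
        (sum_mul_le_gnorm u z (G j)).trans
          (mul_le_mul_of_nonneg_left (hev' j) (gnorm_nonneg _ _))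
      have h3 : ∑ j, gnorm u (G j) * (lam * (ω j * nR)) = lam * nR * (NS + NC) := by
        rw [hNSdef, hNCdef, ← Finset.sum_add_sum_compl Sstar
          (fun j => gnorm u (G j) * (lam * (ω j * nR)))]
        rw [mul_add, Finset.mul_sum, Finset.mul_sum]
        congr 1 <;> exact Finset.sum_congr rfl fun j _ => by ring
      rw [h1]
      exact (Finset.sum_le_sum h2).trans_eq h3
    have hPdiff : NC - NS ≤ P - ∑ j, ω j * gnorm βstar (G j) := by
      have h4 : P - ∑ j, ω j * gnorm βstar (G j)
          = ∑ j, (ω j * gnorm βhat (G j) - ω j * gnorm βstar (G j)) := by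
        rw [Finset.sum_sub_distrib, hPdef]
      rw [h4, ← Finset.sum_add_sum_compl Sstar
        (fun j => ω j * gnorm βhat (G j) - ω j * gnorm βstar (G j))]
      have h5 : ∑ j ∈ Sstarᶜ, (ω j * gnorm βhat (G j) - ω j * gnorm βstar (G j)) = NC := by
        rw [hNCdef]
        refine Finset.sum_congr rfl fun j hj => ?_
        have hj' := Finset.mem_compl.1 hj
        rw [hgu_off j hj', hgstar_off j hj']
        ring
      have h6 : -NS ≤ ∑ j ∈ Sstar, (ω j * gnorm βhat (G j) - ω j * gnorm βstar (G j)) := by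
        rw [hNSdef, ← Finset.sum_neg_distrib]
        refine Finset.sum_le_sum fun j _ => ?_
        have h7 := htri j
        nlinarith [hω j]
      linarith [h5, h6]
    -- combine
    have hcomb : NC - NS ≤ lam * (NS + NC) := by
      have h8 : 2*nR*(NC - NS) ≤ 2*nR*(lam * (NS + NC)) := by
        nlinarith [hm, huz_le, hPdiff, hsplit_uzw, hQU0, hnR]
      have h9 : (0:ℝ) < 2*nR := by positivity
      exact le_of_mul_le_mul_left (by linarith [h8]) h9
    have h10 : NC - NS ≤ (ξ-1) * (NS + NC) / (ξ+1) := by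
      rw [hlamdef, div_mul_eq_mul_div] at hcomb
      exact hcomb
    rw [le_div_iff₀ hξ1] at h10
    nlinarith [h10]
  -- sign restriction
  have F4 : ∀ j ∉ Sstar, ∑ i ∈ G j, u i * (Xᵀ *ᵥ (X *ᵥ u)) i ≤ 0 := by
    intro j hj
    have h1 : ∑ i ∈ G j, u i * (Xᵀ *ᵥ (X *ᵥ u)) i
        = ∑ i ∈ G j, u i * z i - ∑ i ∈ G j, u i * w i := by
      rw [hXtXu, ← Finset.sum_sub_distrib]
      exact Finset.sum_congr rfl fun i _ => by simp [mul_sub]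
    have h2 : ∑ i ∈ G j, u i * z i ≤ gnorm u (G j) * (lam * (ω j * nR)) :=
      (sum_mul_le_gnorm u z (G j)).trans
        (mul_le_mul_of_nonneg_left (hev' j) (gnorm_nonneg _ _))
    have h3 : nR * ω j * gnorm u (G j) ≤ ∑ i ∈ G j, u i * w i := by
      have h4 := F2 j
      rw [hgu_off j hj] at h4
      refine h4.trans_eq (Finset.sum_congr rfl fun i hi => ?_)
      simp [hudef, hβstar0 j hj i hi]
    have hprod : 0 ≤ gnorm u (G j) * (ω j * nR) := mul_nonneg (gnorm_nonneg _ _) (mul_nonneg (hω j).le hnR.le)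
    rw [h1]
    nlinarith [h2, h3, hprod, hlam1]
  -- groupwise bound on Xᵀ X u
  have F5 : ∀ j, (ω j)⁻¹ * gnorm (Xᵀ *ᵥ (X *ᵥ u)) (G j) ≤ nR * (2*ξ/(ξ+1)) := by
    intro j
    have h1 : gnorm (Xᵀ *ᵥ (X *ᵥ u)) (G j) ≤ gnorm z (G j) + gnorm w (G j) := by
      rw [hXtXu]
      have he : gnorm (z - w) (G j) = gnorm (z + -w) (G j) :=
        gnorm_congr fun i _ => by simp [sub_eq_add_neg]
      rw [he]
      have h := gnorm_add_le z (-w) (G j)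
      rwa [gnorm_neg] at h
    have hlam_id : lam + 1 = 2*ξ/(ξ+1) := by
      rw [hlamdef]; field_simp; ring
    have h2 : gnorm (Xᵀ *ᵥ (X *ᵥ u)) (G j) ≤ ω j * (nR * (2*ξ/(ξ+1))) := by
      calc gnorm (Xᵀ *ᵥ (X *ᵥ u)) (G j) ≤ lam*(ω j*nR) + nR*ω j := by
            linarith [h1, hev' j, F1 j]
        _ = ω j * (nR * (lam + 1)) := by ring
        _ = ω j * (nR * (2*ξ/(ξ+1))) := by rw [hlam_id]
    calc (ω j)⁻¹ * gnorm (Xᵀ *ᵥ (X *ᵥ u)) (G j)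
        ≤ (ω j)⁻¹ * (ω j * (nR * (2*ξ/(ξ+1)))) :=
          mul_le_mul_of_nonneg_left h2 (inv_nonneg.2 (hω j).le)
      _ = nR * (2*ξ/(ξ+1)) := by rw [inv_mul_cancel_left₀ (hω j).ne']
  have hW0 : (0:ℝ) ≤ ∑ j ∈ Sstar, ω j ^ 2 := Finset.sum_nonneg fun j _ => sq_nonneg _
  by_cases hNS : NS = 0
  · -- degenerate case : u = 0
    have hNCz : NC = 0 := le_antisymm (by rw [hNS] at hcone; linarith) hNC0
    have huz : ∀ i, u i = 0 := by
      intro i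
      obtain ⟨j0, hj0, _⟩ := hpart i
      have hgj : ω j0 * gnorm u (G j0) = 0 := by
        by_cases hin : j0 ∈ Sstar
        · have hsum : ∑ j ∈ Sstar, ω j * gnorm u (G j) = 0 := by rw [← hNSdef]; exact hNS
          exact (Finset.sum_eq_zero_iff_of_nonneg fun j _ =>
            mul_nonneg (hω j).le (gnorm_nonneg _ _)).1 hsum j0 hin
        · have hsum : ∑ j ∈ Sstarᶜ, ω j * gnorm u (G j) = 0 := by rw [← hNCdef]; exact hNCz
          exact (Finset.sum_eq_zero_iff_of_nonneg fun j _ =>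
            mul_nonneg (hω j).le (gnorm_nonneg _ _)).1 hsum j0 (Finset.mem_compl.2 hin)
      have hg : gnorm u (G j0) = 0 := by
        rcases mul_eq_zero.1 hgj with h | h
        · exact absurd h (hω j0).ne'
        · exact h
      exact gnorm_eq_zero hg i hj0
    have hQUz : QU = 0 := by
      rw [hQUdef]
      refine Finset.sum_eq_zero fun k _ => ?_
      have hu0 : u = 0 := funext huz
      rw [hu0, mulVec_zero]
      simp
    rw [hQUz, zero_div]
    apply div_nonneg (mul_nonneg (sq_nonneg _) hW0) hSCIF.le
  · -- main case
    have hNSpos : 0 < NS := lt_of_le_of_ne hNS0 (Ne.symm hNS)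
    have hNSsum : ∑ j ∈ Sstar, ω j * gnorm u (G j) ≠ 0 := by rw [← hNSdef]; exact hNS
    obtain ⟨j0, hj0mem, hj0ne⟩ := Finset.exists_ne_zero_of_sum_ne_zero hNSsum
    haveI : Nonempty (Fin M) := ⟨j0⟩
    have hbddA : ∀ v' : Fin p → ℝ,
        BddAbove (Set.range fun j => (ω j)⁻¹ * gnorm (Xᵀ *ᵥ (X *ᵥ v')) (G j)) :=
      fun v' => Set.Finite.bddAbove (Set.finite_range _)
    have hsup0 : ∀ v' : Fin p → ℝ,
        0 ≤ ⨆ j, (ω j)⁻¹ * gnorm (Xᵀ *ᵥ (X *ᵥ v')) (G j) := fun v' =>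
      le_trans (mul_nonneg (inv_nonneg.2 (hω j0).le) (gnorm_nonneg _ _)) (le_ciSup (hbddA v') j0)
    set A : ℝ := ⨆ j, (ω j)⁻¹ * gnorm (Xᵀ *ᵥ (X *ᵥ u)) (G j) with hAdef
    have hA_le : A ≤ nR * (2*ξ/(ξ+1)) := ciSup_le F5
    have hA0 : 0 ≤ A := hsup0 u
    have hterm : ∀ j, gnorm (Xᵀ *ᵥ (X *ᵥ u)) (G j) ≤ ω j * A := by
      intro j
      have h := le_ciSup (hbddA u) j
      calc gnorm (Xᵀ *ᵥ (X *ᵥ u)) (G j)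
          = ω j * ((ω j)⁻¹ * gnorm (Xᵀ *ᵥ (X *ᵥ u)) (G j)) := by
            rw [mul_inv_cancel_left₀ (hω j).ne']
        _ ≤ ω j * A := mul_le_mul_of_nonneg_left h (hω j).le
    have hQU_le : QU ≤ A * NS := by
      have h0 : QU = ∑ i, u i * (Xᵀ *ᵥ (X *ᵥ u)) i := hadj_u.symm
      rw [h0, sum_part hpart (fun i => u i * (Xᵀ *ᵥ (X *ᵥ u)) i),
        ← Finset.sum_add_sum_compl Sstar (fun j => ∑ i ∈ G j, u i * (Xᵀ *ᵥ (X *ᵥ u)) i)]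
      have hcomp : ∑ j ∈ Sstarᶜ, ∑ i ∈ G j, u i * (Xᵀ *ᵥ (X *ᵥ u)) i ≤ 0 :=
        Finset.sum_nonpos fun j hj => F4 j (Finset.mem_compl.1 hj)
      have hmain : ∑ j ∈ Sstar, ∑ i ∈ G j, u i * (Xᵀ *ᵥ (X *ᵥ u)) i ≤ A * NS := by
        calc ∑ j ∈ Sstar, ∑ i ∈ G j, u i * (Xᵀ *ᵥ (X *ᵥ u)) i
            ≤ ∑ j ∈ Sstar, gnorm u (G j) * (ω j * A) :=
              Finset.sum_le_sum fun j _ =>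
                (sum_mul_le_gnorm u _ (G j)).trans
                  (mul_le_mul_of_nonneg_left (hterm j) (gnorm_nonneg _ _))
          _ = A * NS := by
              rw [hNSdef, Finset.mul_sum]
              exact Finset.sum_congr rfl fun j _ => by ring
      linarith
    have hSCIF_le : SCIF1 X G ω Sstar ξ ≤ A * (∑ j ∈ Sstar, ω j ^ 2) / (nR * NS) := by
      apply csInf_le
      · refine ⟨0, fun r hr => ?_⟩
        obtain ⟨u', hu', hrEq⟩ := hr
        rw [hrEq]
        refine div_nonneg (mul_nonneg (hsup0 u') ?_) ?_
        · exact Finset.sum_nonneg fun j _ => sq_nonneg _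
        · exact mul_nonneg (Nat.cast_nonneg n)
            (Finset.sum_nonneg fun j _ => mul_nonneg (hω j).le (gnorm_nonneg _ _))
      · refine ⟨u, ⟨⟨?_, ?_⟩, F4⟩, ?_⟩
        · rw [← hNCdef, ← hNSdef]; exact hcone
        · exact hNSsum
        · rw [hAdef, hNSdef, hnRdef]
    have hfin : SCIF1 X G ω Sstar ξ * (nR * NS) ≤ A * (∑ j ∈ Sstar, ω j ^ 2) :=
      (le_div_iff₀ (by positivity : (0:ℝ) < nR * NS)).1 hSCIF_le
    rw [div_le_div_iff₀ hnR hSCIF]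
    have hs1 : QU * SCIF1 X G ω Sstar ξ ≤ A * NS * SCIF1 X G ω Sstar ξ :=
      mul_le_mul_of_nonneg_right hQU_le hSCIF.le
    have hs5 : QU * SCIF1 X G ω Sstar ξ * nR ≤ A * NS * SCIF1 X G ω Sstar ξ * nR :=
      mul_le_mul_of_nonneg_right hs1 hnR.le
    have hs2 : A * (SCIF1 X G ω Sstar ξ * (nR * NS))
        ≤ A * (A * (∑ j ∈ Sstar, ω j ^ 2)) :=
      mul_le_mul_of_nonneg_left hfin hA0
    have hs3 : A * A ≤ (nR * (2*ξ/(ξ+1))) * (nR * (2*ξ/(ξ+1))) :=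
      mul_le_mul hA_le hA_le hA0 (by positivity)
    have hs4 : A * A * (∑ j ∈ Sstar, ω j ^ 2)
        ≤ (nR * (2*ξ/(ξ+1))) * (nR * (2*ξ/(ξ+1))) * (∑ j ∈ Sstar, ω j ^ 2) :=
      mul_le_mul_of_nonneg_right hs3 hW0
    nlinarith [hs5, hs2, hs4, hnR]
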